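/- arXiv:1701.05262 — 2 statements merged into one kernel-verified Lean document; each statement's English description precedes it below -/
import Mathlib

section
/- For each fixed angle ψ with cos ψ ≠ 0 or sin ψ ≠ 0, the function p ↦ F_p(ψ) = ((8p−4) cos²ψ + (5p−7) sin²ψ)/(4 cos²ψ + (p−1) sin²ψ) is strictly increasing on (1, ∞); explicitly, its derivative in p equals (18 cos⁴ψ + 12 cos²ψ + 2)/((−p+5) cos²ψ + p−1)², which is strictly positive. -/
open Real

noncomputable def Fp (p ψ : ℝ) : ℝ :=
  ((8 * p - 4) * cos ψ ^ 2 + (5 * p - 7) * sin ψ ^ 2) /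
    (4 * cos ψ ^ 2 + (p - 1) * sin ψ ^ 2)

/-! With `c = cos² ψ` and `sin² ψ = 1 - c`, `p ↦ F_p(ψ)` is the Möbius map
`p ↦ ((3c + 5) p + (3c - 7)) / ((1 - c) p + (5c - 1))`, whose derivative has numerator
`(3c + 5)(5c - 1) - (3c - 7)(1 - c) = 18c² + 12c + 2 > 0`. Its denominator is
`4c + (p - 1)(1 - c)`, a convex combination of `4` and `p - 1`, hence positive for `p > 1`. -/

theorem hasDerivAt_linear_div_linear {a b c d x : ℝ} (h : c * x + d ≠ 0) :
    HasDerivAt (fun y => (a * y + b) / (c * y + d)) ((a * d - b * c) / (c * x + d) ^ 2) x := by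
  have hnum : HasDerivAt (fun y => a * y + b) a x := by
    simpa using ((hasDerivAt_id x).const_mul a).add_const b
  have hden : HasDerivAt (fun y => c * y + d) c x := by
    simpa using ((hasDerivAt_id x).const_mul c).add_const d
  exact (hnum.div hden h).congr_deriv (by ring)

theorem Fp_eq_linear_div_linear (p ψ : ℝ) :
    Fp p ψ = ((3 * cos ψ ^ 2 + 5) * p + (3 * cos ψ ^ 2 - 7)) /
      ((1 - cos ψ ^ 2) * p + (5 * cos ψ ^ 2 - 1)) := by
  rw [Fp, sin_sq]
  congr 1 <;> ring

theorem Fp_denom_pos {p : ℝ} (hp : 1 < p) (ψ : ℝ) : 0 < (-p + 5) * cos ψ ^ 2 + p - 1 := by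
  have hc : cos ψ ^ 2 ≤ 1 := by rw [← sin_sq_add_cos_sq ψ]; linarith [sq_nonneg (sin ψ)]
  rcases le_total (p - 1) 4 with h | h
  · nlinarith [mul_nonneg (sq_nonneg (cos ψ)) (sub_nonneg.mpr h)]
  · nlinarith [mul_nonneg (sub_nonneg.mpr hc) (sub_nonneg.mpr h)]

theorem hasDerivAt_Fp {p : ℝ} (hp : 1 < p) (ψ : ℝ) :
    HasDerivAt (fun q : ℝ => Fp q ψ)
      ((18 * cos ψ ^ 4 + 12 * cos ψ ^ 2 + 2) / ((-p + 5) * cos ψ ^ 2 + p - 1) ^ 2) p := by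
  have hden : (1 - cos ψ ^ 2) * p + (5 * cos ψ ^ 2 - 1) = (-p + 5) * cos ψ ^ 2 + p - 1 := by
    ring
  simp_rw [Fp_eq_linear_div_linear]
  convert hasDerivAt_linear_div_linear ((hden ▸ Fp_denom_pos hp ψ).ne') using 2
  · ring
  · rw [hden]

theorem deriv_Fp_pos {p : ℝ} (hp : 1 < p) (ψ : ℝ) :
    0 < (18 * cos ψ ^ 4 + 12 * cos ψ ^ 2 + 2) / ((-p + 5) * cos ψ ^ 2 + p - 1) ^ 2 := by
  have := Fp_denom_pos hp ψ
  positivity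

theorem stmt_1_general (ψ : ℝ) :
    StrictMonoOn (fun p : ℝ => Fp p ψ) (Set.Ioi 1) ∧
    ∀ p : ℝ, 1 < p →
      HasDerivAt (fun q : ℝ => Fp q ψ)
        ((18 * cos ψ ^ 4 + 12 * cos ψ ^ 2 + 2) /
          ((-p + 5) * cos ψ ^ 2 + p - 1) ^ 2) p ∧
      0 < (18 * cos ψ ^ 4 + 12 * cos ψ ^ 2 + 2) /
          ((-p + 5) * cos ψ ^ 2 + p - 1) ^ 2 := by
  refine ⟨?_, fun p hp => ⟨hasDerivAt_Fp hp ψ, deriv_Fp_pos hp ψ⟩⟩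
  apply strictMonoOn_of_deriv_pos (convex_Ioi 1)
  · exact fun p hp => (hasDerivAt_Fp hp ψ).continuousAt.continuousWithinAt
  · intro p hp
    rw [interior_Ioi] at hp
    rw [(hasDerivAt_Fp hp ψ).deriv]
    exact deriv_Fp_pos hp ψ

theorem stmt_1 (ψ : ℝ) (hψ : cos ψ ≠ 0 ∨ sin ψ ≠ 0) :
    StrictMonoOn (fun p : ℝ => Fp p ψ) (Set.Ioi 1) ∧
    ∀ p : ℝ, 1 < p →
      HasDerivAt (fun q : ℝ => Fp q ψ)
        ((18 * cos ψ ^ 4 + 12 * cos ψ ^ 2 + 2) /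
          ((-p + 5) * cos ψ ^ 2 + p - 1) ^ 2) p ∧
      0 < (18 * cos ψ ^ 4 + 12 * cos ψ ^ 2 + 2) /
          ((-p + 5) * cos ψ ^ 2 + p - 1) ^ 2 :=
  stmt_1_general ψ
end

section
/- For every p > 1 and every ψ ∈ ℝ, one has 1 + cos²ψ · F_p(ψ) > 0, where F_p(ψ) = ((8p−4) cos²ψ + (5p−7) sin²ψ)/(4 cos²ψ + (p−1) sin²ψ). -/
/-! Substituting `sin²ψ = 1 - c` with `c = cos²ψ ∈ [0, 1]` turns the denominator of `F_p` into
`(p - 1)(1 - c) + 4c > 0`, and clearing it turns `1 + c F_p` into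
`((p - 1) + (4p - 2) c + (3p + 3) c²) / ((p - 1) + (5 - p) c)`, whose numerator has positive
coefficients when `p > 1`. -/

open Real

theorem Fp_eq_cos_sq (p ψ : ℝ) :
    Fp p ψ = (5 * p - 7 + (3 * p + 3) * cos ψ ^ 2) / (p - 1 + (5 - p) * cos ψ ^ 2) := by
  rw [Fp, sin_sq]
  ring

theorem one_add_mul_Fp_rational_pos {p c : ℝ} (hp : 1 < p) (hc₀ : 0 ≤ c) (hc₁ : c ≤ 1) :
    0 < 1 + c * ((5 * p - 7 + (3 * p + 3) * c) / (p - 1 + (5 - p) * c)) := by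
  have hp₁ : 0 < p - 1 := sub_pos.2 hp
  have hden : 0 < p - 1 + (5 - p) * c := by
    nlinarith [mul_nonneg hp₁.le (sub_nonneg.2 hc₁)]
  have hnum : 0 < p - 1 + (4 * p - 2) * c + (3 * p + 3) * c ^ 2 := by
    nlinarith [mul_nonneg hp₁.le hc₀, mul_nonneg hp₁.le (sq_nonneg c)]
  calc (0 : ℝ) < (p - 1 + (4 * p - 2) * c + (3 * p + 3) * c ^ 2) / (p - 1 + (5 - p) * c) :=
        div_pos hnum hden
    _ = 1 + c * ((5 * p - 7 + (3 * p + 3) * c) / (p - 1 + (5 - p) * c)) := by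
        rw [mul_div_assoc', one_add_div hden.ne']
        ring

theorem stmt_3 (p : ℝ) (hp : 1 < p) (ψ : ℝ) :
    0 < 1 + cos ψ ^ 2 * Fp p ψ := by
  rw [Fp_eq_cos_sq]
  exact one_add_mul_Fp_rational_pos hp (sq_nonneg _) (cos_sq_le_one ψ)
end
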